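/- The CRWL entailment relation is not transitive: over the signature with constructors C = ∅ and defined function symbols c, d (arity 0) and h (arity 1), letting Γ = {c → h(c), h(x) → h(d) ⇐ x ⋈ x}, we have Γ ⊢_CRWL h(x) → h(d) and Γ ∪ {h(x) → h(d)} ⊢_CRWL c → h(d), but Γ ⊬_CRWL c → h(d). -/
import Mathlib


/-- Expressions over the CRWL signature with constructors `C = ∅`, defined
function symbols `c`, `d` (arity 0) and `h` (arity 1), plus variables and `⊥`. -/
inductive E6 : Type
  | bot : E6
  | var : ℕ → E6
  | c : E6
  | d : E6
  | h : E6 → E6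
deriving DecidableEq

/-- Partial terms: built from constructors (none here), variables and `⊥`. -/
def E6.isPTerm : E6 → Prop
  | .bot => True
  | .var _ => True
  | _ => False

/-- Total terms: built from constructors (none here) and variables. -/
def E6.isTotal : E6 → Prop
  | .var _ => True
  | _ => False

/-- Substitution. -/
def E6.sub (θ : ℕ → E6) : E6 → E6
  | .bot => .bot
  | .var n => θ n
  | .c => .c
  | .d => .d
  | .h e => .h (e.sub θ)

/-- A CRWL program rule `lhs → rhs ⇐ conds` (conditions are joinability pairs). -/
structure Rule6 where
  lhs : E6
  rhs : E6
  conds : List (E6 × E6)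

mutual
  /-- CRWL reduction statements derivable from a program `Γ`. -/
  inductive Red (Γ : Set Rule6) : E6 → E6 → Prop
    | bot (e : E6) : Red Γ e .bot
    | refl (e : E6) : Red Γ e e
    | mono {e e' : E6} : Red Γ e e' → Red Γ (.h e) (.h e')
    | red {r : Rule6} (hr : r ∈ Γ) (θ : ℕ → E6) (hθ : ∀ n, (θ n).isPTerm)
        (hc : ∀ p ∈ r.conds, Joins Γ (E6.sub θ p.1) (E6.sub θ p.2)) :
        Red Γ (E6.sub θ r.lhs) (E6.sub θ r.rhs)
    | trans {a b e : E6} : Red Γ a b → Red Γ b e → Red Γ a e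

  /-- CRWL joinability statements derivable from a program `Γ`. -/
  inductive Joins (Γ : Set Rule6) : E6 → E6 → Prop
    | join {a b t : E6} : Red Γ a t → Red Γ b t → t.isTotal → Joins Γ a b
end

/-- The program `Γ = {c → h(c), h(x) → h(d) ⇐ x ⋈ x}`. -/
def Γ6 : Set Rule6 :=
  {⟨.c, .h .c, []⟩, ⟨.h (.var 0), .h .d, [(.var 0, .var 0)]⟩}

/-- Expressions containing neither `d` nor variables. -/
def E6.noD : E6 → Prop
  | .bot => True
  | .var _ => False
  | .c => True
  | .d => False
  | .h e => e.noD

lemma red_bot_eq {e e' : E6} (h : Red Γ6 e e') : e = .bot → e' = .bot := by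
  refine Red.rec (motive_1 := fun a b _ => a = .bot → b = .bot)
    (motive_2 := fun _ _ _ => True) ?_ ?_ ?_ ?_ ?_ ?_ h
  · intro _ _; rfl
  · intro _ he; exact he
  · intro e e' _ _ he; simp at he
  · intro r hr θ hθ hc _ he
    rcases hr with hr | hr <;> subst hr <;> simp [E6.sub] at he
  · intro a b e _ _ ih1 ih2 he; exact ih2 (ih1 he)
  · intro _ _ _ _ _ _ _ _; trivial

lemma red_noD {e e' : E6} (h : Red Γ6 e e') : e.noD → e'.noD := by
  refine Red.rec (motive_1 := fun a b _ => a.noD → b.noD)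
    (motive_2 := fun _ _ _ => True) ?_ ?_ ?_ ?_ ?_ ?_ h
  · intro _ _; trivial
  · intro _ he; exact he
  · intro e e' _ ih he; exact ih he
  · intro r hr θ hθ hc _ he
    rcases hr with hr | hr
    · subst hr; simp [E6.sub, E6.noD]
    · subst hr
      exfalso
      have hj := hc (.var 0, .var 0) (by simp)
      simp only [E6.sub] at hj he
      rcases hj with ⟨h1, h2, ht⟩
      cases hθ0 : θ 0 with
      | bot =>
        rw [hθ0] at h1
        have := red_bot_eq h1 rfl
        subst this; simp [E6.isTotal] at ht
      | var n => rw [hθ0] at he; exact he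
      | c => have := hθ 0; rw [hθ0] at this; exact this
      | d => have := hθ 0; rw [hθ0] at this; exact this
      | h _ => have := hθ 0; rw [hθ0] at this; exact this
  · intro a b e _ _ ih1 ih2 he; exact ih2 (ih1 he)
  · intro _ _ _ _ _ _ _ _; trivial

/-- The CRWL entailment relation is not transitive:
`Γ ⊢ h(x) → h(d)` and `Γ ∪ {h(x) → h(d)} ⊢ c → h(d)`, but `Γ ⊬ c → h(d)`. -/
theorem crwl_not_transitive :
    Red Γ6 (.h (.var 0)) (.h .d) ∧
    Red (Γ6 ∪ {⟨.h (.var 0), .h .d, []⟩}) .c (.h .d) ∧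
    ¬ Red Γ6 .c (.h .d) := by
  refine ⟨?_, ?_, ?_⟩
  · have := Red.red (Γ := Γ6) (r := ⟨.h (.var 0), .h .d, [(.var 0, .var 0)]⟩)
      (by simp [Γ6]) (fun n => .var n) (fun n => trivial)
      (by
        intro p hp
        simp at hp
        subst hp
        exact Joins.join (Red.refl _) (Red.refl _) trivial)
    simpa [E6.sub] using this
  · set Γ' := Γ6 ∪ {⟨.h (.var 0), .h .d, []⟩}
    have h1 : Red Γ' .c (.h .c) := by
      have := Red.red (Γ := Γ') (r := ⟨.c, .h .c, []⟩)
        (by simp [Γ', Γ6]) (fun n => .bot) (fun n => trivial) (by simp)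
      simpa [E6.sub] using this
    have h2 : Red Γ' (.h .c) (.h .bot) := Red.mono (Red.bot _)
    have h3 : Red Γ' (.h .bot) (.h .d) := by
      have := Red.red (Γ := Γ') (r := ⟨.h (.var 0), .h .d, []⟩)
        (by simp [Γ']) (fun n => .bot) (fun n => trivial) (by simp)
      simpa [E6.sub] using this
    exact (h1.trans h2).trans h3
  · intro h
    exact red_noD h trivial
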